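/- Fix σ² > 0, an N_I × M_E complex matrix F, an N_I × M_I complex matrix H, and an M_I × M_I complex positive semidefinite matrix S_I. Define R(S_E) = log₂ det(I + (F S_E Fᴴ + σ² I)^{-1} H S_I Hᴴ) for M_E × M_E positive semidefinite S_E. Then R is convex on the set of positive semidefinite matrices S_E: for all positive semidefinite S₁, S₂ and θ ∈ [0,1], R(θS₁ + (1−θ)S₂) ≤ θ·R(S₁) + (1−θ)·R(S₂). -/

import Mathlib

open Matrix ComplexOrder

/-!
Write `H S_I Hᴴ = Vᴴ V`. By Sylvester's determinant identity and the Woodbury identity,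
`log det (I + Y⁻¹ Vᴴ V) = - log det G(Y)` with `G(Y) = (I + V Y⁻¹ Vᴴ)⁻¹ = I - V (Y + Vᴴ V)⁻¹ Vᴴ`.
Operator convexity of the inverse makes `G` concave in the Loewner order, and `log det` is monotone
and concave on positive definite matrices, so `Y ↦ - log det G(Y)` is convex. Finally
`Y = F S_E Fᴴ + σ² I` depends affinely on `S_E`.
-/

open scoped MatrixOrder

namespace Matrix

lemma convex_setOf_posDef {n : Type*} : Convex ℝ {A : Matrix n n ℂ | A.PosDef} :=
  convex_iff_forall_pos.mpr fun _ hA _ hB _ _ ha hb _ => (hA.smul ha).add (hB.smul hb)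

variable {m n : Type*} [Fintype m] [Fintype n] [DecidableEq m] [DecidableEq n]

theorem inv_one_add_mul_inv_mul {α : Type*} [CommRing α] (U : Matrix m n α) (V : Matrix n m α)
    {Y : Matrix n n α} (hY : IsUnit Y) (hYVU : IsUnit (Y + V * U)) :
    (1 + U * Y⁻¹ * V)⁻¹ = 1 - U * (Y + V * U)⁻¹ * V := by
  have hY' : (Y⁻¹)⁻¹ = Y := nonsing_inv_nonsing_inv Y ((isUnit_iff_isUnit_det Y).mp hY)
  simpa [hY'] using add_mul_mul_inv_eq_sub 1 U Y⁻¹ V isUnit_one (isUnit_nonsing_inv_iff.mpr hY)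
    (by simpa [hY'] using hYVU)

lemma IsHermitian.det_smul_one_add_smul {D : Matrix n n ℂ} (hD : D.IsHermitian) (a b : ℝ) :
    (a • 1 + b • D).det = ∏ i, ((a + b * hD.eigenvalues i : ℝ) : ℂ) := by
  have hcfc : a • (1 : Matrix n n ℂ) + b • D = cfc (fun x => a + b * x) D := by
    rw [cfc_const_add a (fun x => b * x) D, cfc_const_mul_id b D]
    simp [Algebra.algebraMap_eq_smul_one]
  rw [hcfc, hD.cfc_eq]
  simp [IsHermitian.cfc, -Unitary.conjStarAlgAut_apply, det_diagonal]

lemma PosDef.det_re_pos {A : Matrix n n ℂ} (hA : A.PosDef) : 0 < A.det.re :=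
  (Complex.pos_iff.mp hA.det_pos).1

/-- Simultaneous diagonalisation by congruence: with `S = √A`, `a • A + b • B` equals
`S (a • 1 + b • S⁻¹ B S⁻¹) S`, and `μ` is the spectrum of `S⁻¹ B S⁻¹`. -/
lemma PosDef.exists_det_re_smul_add_smul {A B : Matrix n n ℂ} (hA : A.PosDef)
    (hB : B.PosSemidef) : ∃ μ : n → ℝ, (∀ i, 0 ≤ μ i) ∧
      ∀ a b : ℝ, (a • A + b • B).det.re = A.det.re * ∏ i, (a + b * μ i) := by
  set S := CFC.sqrt A
  have hSpos : IsStrictlyPositive S :=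
    IsStrictlyPositive.sqrt A (isStrictlyPositive_iff_posDef.mpr hA)
  have hSS : S * S = A := CFC.sqrt_mul_sqrt_self A hA.posSemidef.nonneg
  have hSH : Sᴴ = S := hSpos.nonneg.isSelfAdjoint
  have hSdet : IsUnit S.det := (isUnit_iff_isUnit_det S).mp hSpos.isUnit
  set D := S⁻¹ * B * S⁻¹
  have hD : D.PosSemidef := by
    simpa [conjTranspose_nonsing_inv, hSH] using hB.conjTranspose_mul_mul_same S⁻¹
  have hSDS : S * D * S = B := by
    simp only [D, ← Matrix.mul_assoc, mul_nonsing_inv S hSdet, one_mul]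
    rw [Matrix.mul_assoc, nonsing_inv_mul S hSdet, mul_one]
  refine ⟨hD.1.eigenvalues, hD.eigenvalues_nonneg, fun a b => ?_⟩
  have hpencil : a • A + b • B = S * (a • 1 + b • D) * S := by
    rw [← hSS, ← hSDS]
    simp only [Matrix.mul_add, Matrix.add_mul, Matrix.mul_smul, Matrix.smul_mul, mul_one,
      Matrix.mul_assoc]
  rw [hpencil, det_mul, det_mul, hD.1.det_smul_one_add_smul, mul_right_comm, ← det_mul, hSS,
    ← Complex.ofReal_prod, Complex.re_mul_ofReal]

lemma PosDef.det_re_le_det_re_of_le {A B : Matrix n n ℂ} (hA : A.PosDef) (hAB : A ≤ B) :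
    A.det.re ≤ B.det.re := by
  obtain ⟨μ, hμ, hdet⟩ := hA.exists_det_re_smul_add_smul (Matrix.le_iff.mp hAB)
  have h := hdet 1 1
  simp only [one_smul, add_sub_cancel, one_mul] at h
  rw [h]
  refine le_mul_of_one_le_right hA.det_re_pos.le (Finset.one_le_prod fun i _ => ?_)
  linarith [hμ i]

lemma concaveOn_log_det_re :
    ConcaveOn ℝ {A : Matrix n n ℂ | A.PosDef} (fun A => Real.log A.det.re) := by
  refine ⟨convex_setOf_posDef, fun A hA B hB a b ha hb hab => ?_⟩
  obtain ⟨μ, hμ, hdet⟩ := PosDef.exists_det_re_smul_add_smul hA hB.posSemidef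
  have hdetB : B.det.re = A.det.re * ∏ i, μ i := by simpa using hdet 0 1
  have hprod : 0 < ∏ i, μ i := pos_of_mul_pos_right (hdetB ▸ hB.det_re_pos) hA.det_re_pos.le
  have hμpos (i : n) : 0 < μ i :=
    (hμ i).lt_of_ne' (Finset.prod_ne_zero_iff.mp hprod.ne' i (Finset.mem_univ i))
  have hpencil_pos (i : n) : 0 < a + b * μ i := by
    rcases hb.eq_or_lt with rfl | hb
    · linarith
    · have := mul_pos hb (hμpos i)
      linarith
  have hlog_concave (i : n) : b * Real.log (μ i) ≤ Real.log (a + b * μ i) := by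
    simpa using strictConcaveOn_log_Ioi.concaveOn.2 (Set.mem_Ioi.2 one_pos)
      (Set.mem_Ioi.2 (hμpos i)) ha hb hab
  simp only [smul_eq_mul]
  calc a * Real.log A.det.re + b * Real.log B.det.re
      = Real.log A.det.re + ∑ i, b * Real.log (μ i) := by
        rw [hdetB, Real.log_mul hA.det_re_pos.ne' hprod.ne',
          Real.log_prod fun i _ => (hμpos i).ne', ← Finset.mul_sum]
        linear_combination Real.log A.det.re * hab
    _ ≤ Real.log A.det.re + ∑ i, Real.log (a + b * μ i) := by
        gcongr with i
        exact hlog_concave i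
    _ = Real.log (a • A + b • B).det.re := by
        rw [hdet, Real.log_mul hA.det_re_pos.ne' (Finset.prod_pos fun i _ => hpencil_pos i).ne',
          Real.log_prod fun i _ => (hpencil_pos i).ne']

open scoped Matrix.Norms.L2Operator in
lemma PosDef.inv_smul_add_smul_le {W₁ W₂ : Matrix n n ℂ} (h₁ : W₁.PosDef) (h₂ : W₂.PosDef)
    {a b : ℝ} (ha : 0 ≤ a) (hb : 0 ≤ b) (hab : a + b = 1) :
    (a • W₁ + b • W₂)⁻¹ ≤ a • W₁⁻¹ + b • W₂⁻¹ := by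
  simp only [nonsing_inv_eq_ringInverse]
  exact CStarAlgebra.convexOn_ringInverse.2 (isStrictlyPositive_iff_posDef.mpr h₁)
    (isStrictlyPositive_iff_posDef.mpr h₂) ha hb hab

lemma PosDef.posDef_one_add_mul_inv_mul_conjTranspose {Y : Matrix n n ℂ} (hY : Y.PosDef)
    (V : Matrix m n ℂ) : (1 + V * Y⁻¹ * Vᴴ).PosDef :=
  PosDef.one.add_posSemidef (hY.inv.posSemidef.mul_mul_conjTranspose_same V)

lemma PosDef.log_det_re_one_add_inv_mul {Y : Matrix n n ℂ} (hY : Y.PosDef) (V : Matrix m n ℂ) :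
    Real.log (1 + Y⁻¹ * (Vᴴ * V)).det.re = -Real.log (1 + V * Y⁻¹ * Vᴴ)⁻¹.det.re := by
  have hK := hY.posDef_one_add_mul_inv_mul_conjTranspose V
  have hK_real : (1 + V * Y⁻¹ * Vᴴ).det = ((1 + V * Y⁻¹ * Vᴴ).det.re : ℂ) :=
    Complex.ext rfl (Complex.pos_iff.mp hK.det_pos).2.symm
  rw [← Matrix.mul_assoc, det_one_add_mul_comm, det_nonsing_inv, Ring.inverse_eq_inv, hK_real,
    ← Complex.ofReal_inv, Complex.ofReal_re, Real.log_inv, neg_neg, Matrix.mul_assoc]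

lemma PosDef.smul_add_smul_le_inv_one_add_mul_inv_mul {Y₁ Y₂ : Matrix n n ℂ} (h₁ : Y₁.PosDef)
    (h₂ : Y₂.PosDef) (V : Matrix m n ℂ) {a b : ℝ} (ha : 0 ≤ a) (hb : 0 ≤ b) (hab : a + b = 1) :
    a • (1 + V * Y₁⁻¹ * Vᴴ)⁻¹ + b • (1 + V * Y₂⁻¹ * Vᴴ)⁻¹
      ≤ (1 + V * (a • Y₁ + b • Y₂)⁻¹ * Vᴴ)⁻¹ := by
  have hW {Y : Matrix n n ℂ} (hY : Y.PosDef) : (Y + Vᴴ * V).PosDef :=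
    hY.add_posSemidef (posSemidef_conjTranspose_mul_self V)
  have hwood {Y : Matrix n n ℂ} (hY : Y.PosDef) :=
    inv_one_add_mul_inv_mul V Vᴴ hY.isUnit (hW hY).isUnit
  have hmix : a • Y₁ + b • Y₂ + Vᴴ * V = a • (Y₁ + Vᴴ * V) + b • (Y₂ + Vᴴ * V) := by
    rw [smul_add, smul_add, add_add_add_comm, ← add_smul, hab, one_smul]
  rw [hwood h₁, hwood h₂, hwood (convex_setOf_posDef h₁ h₂ ha hb hab), hmix, Matrix.le_iff]
  have hinv := Matrix.le_iff.mp ((hW h₁).inv_smul_add_smul_le (hW h₂) ha hb hab)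
  convert hinv.mul_mul_conjTranspose_same V using 1
  obtain rfl : b = 1 - a := by linarith
  simp only [Matrix.mul_sub, Matrix.sub_mul, Matrix.mul_add, Matrix.add_mul, Matrix.mul_smul,
    Matrix.smul_mul]
  module

theorem convexOn_log_det_re_one_add_inv_mul (V : Matrix m n ℂ) :
    ConvexOn ℝ {Y : Matrix n n ℂ | Y.PosDef} (fun Y => Real.log (1 + Y⁻¹ * (Vᴴ * V)).det.re) := by
  refine ⟨convex_setOf_posDef, fun Y₁ h₁ Y₂ h₂ a b ha hb hab => ?_⟩
  have hG {Y : Matrix n n ℂ} (hY : Y.PosDef) : (1 + V * Y⁻¹ * Vᴴ)⁻¹.PosDef :=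
    (hY.posDef_one_add_mul_inv_mul_conjTranspose V).inv
  have hGmix := convex_setOf_posDef (hG h₁) (hG h₂) ha hb hab
  have hmono := hGmix.det_re_le_det_re_of_le
    (h₁.smul_add_smul_le_inv_one_add_mul_inv_mul h₂ V ha hb hab)
  have hconc := concaveOn_log_det_re.2 (hG h₁) (hG h₂) ha hb hab
  simp only [smul_eq_mul, h₁.log_det_re_one_add_inv_mul, h₂.log_det_re_one_add_inv_mul,
    (convex_setOf_posDef h₁ h₂ ha hb hab).log_det_re_one_add_inv_mul] at hconc ⊢
  linarith [Real.log_le_log hGmix.det_re_pos hmono]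

end Matrix

/-- The achievable rate
`R(S_E) = log₂ det(I + (F S_E Fᴴ + σ² I)⁻¹ H S_I Hᴴ)`
(with `σ² > 0`, fixed channels `F`, `H` and fixed positive semidefinite information
covariance `S_I`) is convex in the positive semidefinite energy covariance `S_E`. -/
theorem rate_convex_in_energy_covariance
    (NI MEdim MI : ℕ) (σsq : ℝ) (hσ : 0 < σsq)
    (F : Matrix (Fin NI) (Fin MEdim) ℂ) (H : Matrix (Fin NI) (Fin MI) ℂ)
    (SI : Matrix (Fin MI) (Fin MI) ℂ) (hSI : SI.PosSemidef)
    (S₁ S₂ : Matrix (Fin MEdim) (Fin MEdim) ℂ)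
    (hS₁ : S₁.PosSemidef) (hS₂ : S₂.PosSemidef)
    (θ : ℝ) (hθ₀ : 0 ≤ θ) (hθ₁ : θ ≤ 1) :
    Real.logb 2
        ((1 + (F * (θ • S₁ + (1 - θ) • S₂) * Fᴴ + (σsq : ℂ) • 1)⁻¹ * (H * SI * Hᴴ)).det.re)
      ≤ θ * Real.logb 2 ((1 + (F * S₁ * Fᴴ + (σsq : ℂ) • 1)⁻¹ * (H * SI * Hᴴ)).det.re)
        + (1 - θ) * Real.logb 2 ((1 + (F * S₂ * Fᴴ + (σsq : ℂ) • 1)⁻¹ * (H * SI * Hᴴ)).det.re) := by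
  obtain ⟨V, hV⟩ := CStarAlgebra.nonneg_iff_eq_star_mul_self.mp
    (hSI.mul_mul_conjTranspose_same H).nonneg
  have hY {S : Matrix (Fin MEdim) (Fin MEdim) ℂ} (hS : S.PosSemidef) :
      (F * S * Fᴴ + (σsq : ℂ) • 1).PosDef :=
    (PosDef.one.smul (Complex.zero_lt_real.mpr hσ)).posSemidef_add
      (hS.mul_mul_conjTranspose_same F)
  have hmix : F * (θ • S₁ + (1 - θ) • S₂) * Fᴴ + (σsq : ℂ) • 1
      = θ • (F * S₁ * Fᴴ + (σsq : ℂ) • 1) + (1 - θ) • (F * S₂ * Fᴴ + (σsq : ℂ) • 1) := by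
    simp only [Matrix.mul_add, Matrix.add_mul, Matrix.mul_smul, Matrix.smul_mul]
    module
  have h := (convexOn_log_det_re_one_add_inv_mul V).2 (hY hS₁) (hY hS₂) hθ₀ (sub_nonneg.mpr hθ₁)
    (add_sub_cancel θ 1)
  simp only [smul_eq_mul, ← star_eq_conjTranspose, ← hV, ← hmix] at h
  simp only [Real.logb, mul_div_assoc', ← add_div]
  exact div_le_div_of_nonneg_right h (Real.log_nonneg one_le_two)
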